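/- arXiv:math/9401203 — 13 statements merged into one kernel-verified Lean document; each statement's English description precedes it below -/
import Mathlib

section
/- Let X be a topological space with a base 𝒰 admitting a decomposition 𝒰 = ⋃_{x∈X} 𝒰_x such that (i) each 𝒰_x is a neighbourhood base of x, and (ii) for each x ∈ X the family ⋃_{y≠x} 𝒰_y does not contain a neighbourhood base of x. Then X has a base 𝒲 = ⋃_{x∈X} 𝒲_x with each 𝒲_x a neighbourhood base of x, satisfying property (*): for all x ≠ y, all U ∈ 𝒲_x and V ∈ 𝒲_y, if x ∈ V and y ∈ U then V \ U ≠ ∅. -/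
open TopologicalSpace Cardinal Set

universe u

section Defs

variable {X : Type u} [TopologicalSpace X]

/-- `B` is a neighbourhood base of `x`: members are open sets containing `x`,
and every open set containing `x` contains a member of `B`. -/
def NbhdBasisAt (B : Set (Set X)) (x : X) : Prop :=
  (∀ U ∈ B, IsOpen U ∧ x ∈ U) ∧ ∀ V : Set X, IsOpen V → x ∈ V → ∃ U ∈ B, U ⊆ V

/-- The family `F` contains a neighbourhood base of `x`. -/
def ContainsNbhdBasisAt (F : Set (Set X)) (x : X) : Prop :=
  ∀ V : Set X, IsOpen V → x ∈ V → ∃ U ∈ F, x ∈ U ∧ U ⊆ V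

/-- Property (*) of a decomposition. -/
def StarProperty (𝒲 : X → Set (Set X)) : Prop :=
  ∀ x y : X, x ≠ y → ∀ U ∈ 𝒲 x, ∀ V ∈ 𝒲 y, x ∈ V → y ∈ U → (V \ U).Nonempty

/-- `𝒰` is an irreducible decomposition of a base of `X`. -/
def IsIrreducibleDecomp (𝒰 : X → Set (Set X)) : Prop :=
  IsTopologicalBasis (⋃ x, 𝒰 x) ∧ (∀ x, NbhdBasisAt (𝒰 x) x) ∧
    ∀ x : X, ¬ ContainsNbhdBasisAt (⋃ y ∈ {y : X | y ≠ x}, 𝒰 y) x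

def HasIrreducibleBase (X : Type u) [TopologicalSpace X] : Prop :=
  ∃ 𝒰 : X → Set (Set X), IsIrreducibleDecomp 𝒰

/-- `f` is a neighbourhood assignment on `Y`. -/
def IsNbhdAssignment (Y : Set X) (f : X → Set X) : Prop :=
  ∀ y ∈ Y, IsOpen (f y) ∧ y ∈ f y

/-- `D_N^f = { y ∈ Y : y ∈ N ⊆ f y }`. -/
def Dset (Y : Set X) (f : X → Set X) (N : Set X) : Set X :=
  {y | y ∈ Y ∧ y ∈ N ∧ N ⊆ f y}

/-- `Y` is weakly separated (as a subspace of `X`). -/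
def WeaklySeparatedSub (Y : Set X) : Prop :=
  ∃ f : X → Set X, IsNbhdAssignment Y f ∧
    ∀ y ∈ Y, ∀ z ∈ Y, y ≠ z → y ∉ f z ∨ z ∉ f y

/-- `Z` is pseudo weakly separated: it contains a weakly separated subspace of the
same cardinality. -/
def PseudoWeaklySeparated (Z : Set X) : Prop :=
  ∃ W ⊆ Z, #W = #Z ∧ WeaklySeparatedSub W

/-- The weight of a space: least cardinality of a base. -/
noncomputable def weight (X : Type u) [TopologicalSpace X] : Cardinal.{u} :=
  sInf {c | ∃ B : Set (Set X), IsTopologicalBasis B ∧ c = #B}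

/-- The character of `X` at `x`: least cardinality of a neighbourhood base at `x`. -/
noncomputable def charAt (x : X) : Cardinal.{u} :=
  sInf {c | ∃ B : Set (Set X), NbhdBasisAt B x ∧ c = #B}

/-- The character of `X`. -/
noncomputable def character (X : Type u) [TopologicalSpace X] : Cardinal.{u} :=
  ⨆ x : X, charAt x

/-- `N` is a network of `X`. -/
def IsNetwork (N : Set (Set X)) : Prop :=
  ∀ x : X, ∀ U : Set X, IsOpen U → x ∈ U → ∃ M ∈ N, x ∈ M ∧ M ⊆ U

/-- The net weight of `X`: least cardinality of a network. -/
noncomputable def netWeight (X : Type u) [TopologicalSpace X] : Cardinal.{u} :=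
  sInf {c | ∃ N : Set (Set X), IsNetwork N ∧ c = #N}

/-- Tkačenko's cardinal function `R`. -/
noncomputable def Rinv (X : Type u) [TopologicalSpace X] : Cardinal.{u} :=
  sSup {c | ∃ Y : Set X, WeaklySeparatedSub Y ∧ c = #Y}

/-- `S` is right-separated: it carries a well-ordering in which every point has an
open neighbourhood avoiding all later points of `S`. -/
def RightSeparated (S : Set X) : Prop :=
  ∃ r : S → S → Prop, IsWellOrder S r ∧
    ∀ x : S, ∃ U : Set X, IsOpen U ∧ (x : X) ∈ U ∧ ∀ y : S, r x y → (y : X) ∉ U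

end Defs

/-- a space with an irreducible base has a base with property (*). -/
theorem statement0 {X : Type u} [TopologicalSpace X] (𝒰 : X → Set (Set X))
    (h : IsIrreducibleDecomp 𝒰) :
    ∃ 𝒲 : X → Set (Set X),
      TopologicalSpace.IsTopologicalBasis (⋃ x, 𝒲 x) ∧
      (∀ x, NbhdBasisAt (𝒲 x) x) ∧ StarProperty 𝒲 := by
  obtain ⟨-, hnb, hirr⟩ := h
  -- For each x pick an open V x ∋ x witnessing irreducibility
  have key : ∀ x : X, ∃ V : Set X, IsOpen V ∧ x ∈ V ∧
      ∀ U ∈ ⋃ y ∈ {y : X | y ≠ x}, 𝒰 y, ¬(x ∈ U ∧ U ⊆ V) := by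
    intro x
    have := hirr x
    unfold ContainsNbhdBasisAt at this
    push_neg at this
    obtain ⟨V, hVo, hxV, hV⟩ := this
    exact ⟨V, hVo, hxV, fun U hU ⟨h1, h2⟩ => (hV U hU h1) h2⟩
  choose V hVo hxV hVmax using key
  refine ⟨fun x => {U ∈ 𝒰 x | U ⊆ V x}, ?_, ?_, ?_⟩
  · apply isTopologicalBasis_of_isOpen_of_nhds
    · rintro U hU
      simp only [mem_iUnion] at hU
      obtain ⟨x, hU, -⟩ := hU
      exact ((hnb x).1 U hU).1
    · intro x W hxW hWo
      obtain ⟨U, hU, hUsub⟩ := (hnb x).2 (W ∩ V x) (hWo.inter (hVo x)) ⟨hxW, hxV x⟩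
      exact ⟨U, mem_iUnion.2 ⟨x, hU, hUsub.trans inter_subset_right⟩,
        ((hnb x).1 U hU).2, hUsub.trans inter_subset_left⟩
  · intro x
    constructor
    · intro U hU; exact (hnb x).1 U hU.1
    · intro W hWo hxW
      obtain ⟨U, hU, hUsub⟩ := (hnb x).2 (W ∩ V x) (hWo.inter (hVo x)) ⟨hxW, hxV x⟩
      exact ⟨U, ⟨hU, hUsub.trans inter_subset_right⟩, hUsub.trans inter_subset_left⟩
  · intro x y hxy U hU Vy hVy hxVy hyU
    by_contra hsub
    rw [not_nonempty_iff_eq_empty, diff_eq_empty] at hsub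
    refine hVmax x Vy ?_ ⟨hxVy, hsub.trans hU.2⟩
    exact mem_biUnion (show y ∈ {y : X | y ≠ x} from hxy.symm) hVy.1
end

section
/- If a topological space X is weakly separated, then X has an irreducible base. -/
open TopologicalSpace Cardinal Set

universe u

/-- a weakly separated space has an irreducible base. -/
theorem statement1 {X : Type u} [TopologicalSpace X]
    (h : WeaklySeparatedSub (Set.univ : Set X)) :
    HasIrreducibleBase X := by
  obtain ⟨f, hf, hsep⟩ := h
  refine ⟨fun x => {U | IsOpen U ∧ x ∈ U ∧ U ⊆ f x}, ?_, ?_, ?_⟩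
  · apply isTopologicalBasis_of_isOpen_of_nhds
    · intro U hU
      simp only [mem_iUnion, mem_setOf_eq] at hU
      obtain ⟨x, hUo, -, -⟩ := hU
      exact hUo
    · intro x V hxV hV
      exact ⟨V ∩ f x, mem_iUnion.2 ⟨x, hV.inter (hf x trivial).1,
        ⟨hxV, (hf x trivial).2⟩, inter_subset_right⟩,
        ⟨hxV, (hf x trivial).2⟩, inter_subset_left⟩
  · intro x
    constructor
    · rintro U ⟨hUo, hxU, -⟩; exact ⟨hUo, hxU⟩
    · intro V hV hxV
      exact ⟨V ∩ f x, ⟨hV.inter (hf x trivial).1, ⟨hxV, (hf x trivial).2⟩,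
        inter_subset_right⟩, inter_subset_left⟩
  · intro x hc
    obtain ⟨U, hU, hxU, hUfx⟩ := hc (f x) (hf x trivial).1 (hf x trivial).2
    simp only [mem_iUnion, mem_setOf_eq] at hU
    obtain ⟨y, hyx, hUo, hyU, hUfy⟩ := hU
    rcases hsep x trivial y trivial (Ne.symm hyx) with h1 | h2
    · exact h1 (hUfy hxU)
    · exact h2 (hUfx hyU)
end

section
/- If a topological space X has an irreducible base and 𝒲 ⊆ 𝒰 is a subfamily of that irreducible base with |𝒲| < |X|, then 𝒲 is not a base of X; consequently every irreducible base of X has cardinality at least |X|. -/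
open TopologicalSpace Cardinal Set

universe u

/-- no subfamily of an irreducible base of cardinality `< |X|` is a base;
consequently an irreducible base has cardinality at least `|X|`. -/
theorem statement2 {X : Type u} [TopologicalSpace X] (𝒰 : X → Set (Set X))
    (h : IsIrreducibleDecomp 𝒰) :
    (∀ 𝒲 : Set (Set X), 𝒲 ⊆ (⋃ x, 𝒰 x) → #𝒲 < #X →
      ¬ TopologicalSpace.IsTopologicalBasis 𝒲) ∧
    #X ≤ #(⋃ x, 𝒰 x) := by
  obtain ⟨hbase, hnb, hirr⟩ := h
  have main : ∀ 𝒲 : Set (Set X), 𝒲 ⊆ (⋃ x, 𝒰 x) →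
      TopologicalSpace.IsTopologicalBasis 𝒲 → #X ≤ #𝒲 := by
    intro 𝒲 hsub hW
    have key : ∀ x : X, ∃ U ∈ 𝒲, U ∈ 𝒰 x ∧ ∀ y, y ≠ x → U ∉ 𝒰 y := by
      intro x
      by_contra hcon
      push_neg at hcon
      apply hirr x
      intro V hV hxV
      obtain ⟨U, hU𝒲, hxU, hUV⟩ := hW.exists_subset_of_mem_open hxV hV
      have hmem : U ∈ ⋃ y ∈ {y : X | y ≠ x}, 𝒰 y := by
        rcases mem_iUnion.1 (hsub hU𝒲) with ⟨z, hz⟩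
        by_cases hzx : z = x
        · subst hzx
          obtain ⟨y, hyx, hUy⟩ := hcon U hU𝒲 hz
          exact mem_biUnion hyx hUy
        · exact mem_biUnion hzx hz
      exact ⟨U, hmem, hxU, hUV⟩
    choose U hU𝒲 hUx hUnot using key
    have hinj : Function.Injective U := by
      intro a b hab
      by_contra hne
      exact hUnot b a hne (hab ▸ hUx a)
    calc #X = #(Set.range U) := (Cardinal.mk_range_eq U hinj).symm
      _ ≤ #𝒲 := Cardinal.mk_le_mk_of_subset (Set.range_subset_iff.2 hU𝒲)
  exact ⟨fun 𝒲 hsub hlt hW => absurd (main 𝒲 hsub hW) (not_le.2 hlt),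
    main _ subset_rfl hbase⟩
end

section
/- If a topological space X has an irreducible base, then the weight of X equals χ(X)·|X| (the maximum of the character of X and the cardinality of X). -/
open TopologicalSpace Cardinal Set

universe u

section Aux

variable {X : Type u} [TopologicalSpace X]

lemma nbhdBasisAt_opens (x : X) : NbhdBasisAt {U : Set X | IsOpen U ∧ x ∈ U} x :=
  ⟨fun _ hU => hU, fun V hV hxV => ⟨V, ⟨hV, hxV⟩, subset_rfl⟩⟩

lemma charAt_le (x : X) {B : Set (Set X)} (hB : NbhdBasisAt B x) : charAt x ≤ #B :=
  csInf_le' ⟨B, hB, rfl⟩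

lemma exists_nbhdBasis_card (x : X) :
    ∃ B : Set (Set X), NbhdBasisAt B x ∧ charAt x = #B := by
  have hne : {c : Cardinal.{u} | ∃ B : Set (Set X), NbhdBasisAt B x ∧ c = #B}.Nonempty :=
    ⟨_, _, nbhdBasisAt_opens x, rfl⟩
  exact csInf_mem hne

lemma weight_le {B : Set (Set X)} (hB : IsTopologicalBasis B) : weight X ≤ #B :=
  csInf_le' ⟨B, hB, rfl⟩

lemma exists_basis_card :
    ∃ B : Set (Set X), IsTopologicalBasis B ∧ weight X = #B := by
  have hne : {c : Cardinal.{u} | ∃ B : Set (Set X), IsTopologicalBasis B ∧ c = #B}.Nonempty :=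
    ⟨_, _, isTopologicalBasis_opens, rfl⟩
  exact csInf_mem hne

lemma character_le_weight : character X ≤ weight X := by
  obtain ⟨B, hB, hcard⟩ := exists_basis_card (X := X)
  rw [hcard]
  refine ciSup_le' fun x => ?_
  have hb : NbhdBasisAt {U ∈ B | x ∈ U} x := by
    refine ⟨fun U hU => ⟨hB.isOpen hU.1, hU.2⟩, fun V hV hxV => ?_⟩
    obtain ⟨U, hU, hxU, hUV⟩ := hB.exists_subset_of_mem_open hxV hV
    exact ⟨U, ⟨hU, hxU⟩, hUV⟩
  exact (charAt_le x hb).trans (mk_le_mk_of_subset (sep_subset _ _))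

lemma irr_witness {𝒰 : X → Set (Set X)} (h : IsIrreducibleDecomp 𝒰) (x : X) :
    ∃ V : Set X, IsOpen V ∧ x ∈ V ∧
      ∀ y, y ≠ x → ∀ U ∈ 𝒰 y, x ∈ U → ¬ U ⊆ V := by
  have hx := h.2.2 x
  unfold ContainsNbhdBasisAt at hx
  push_neg at hx
  obtain ⟨V, hVopen, hxV, hV⟩ := hx
  refine ⟨V, hVopen, hxV, fun y hy U hU hxU hUV => ?_⟩
  have hmem : U ∈ ⋃ y ∈ {y : X | y ≠ x}, 𝒰 y := mem_biUnion (by exact hy) hU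
  exact hV U hmem hxU hUV

lemma card_le_basis (h : HasIrreducibleBase X) {B : Set (Set X)}
    (hB : IsTopologicalBasis B) : #X ≤ #B := by
  obtain ⟨𝒰, h𝒰⟩ := h
  have hnb := h𝒰.2.1
  choose V hVopen hxV hVwit using irr_witness h𝒰
  choose Usub hUmem hUV using fun x : X => (hnb x).2 (V x) (hVopen x) (hxV x)
  have hxU : ∀ x, x ∈ Usub x := fun x => ((hnb x).1 _ (hUmem x)).2
  have hUopen : ∀ x, IsOpen (Usub x) := fun x => ((hnb x).1 _ (hUmem x)).1
  choose Bx hBxB hxBx hBxU using fun x : X =>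
    hB.exists_subset_of_mem_open (hxU x) (hUopen x)
  choose W hWmem hWB using fun x : X =>
    (hnb x).2 (Bx x) (hB.isOpen (hBxB x)) (hxBx x)
  have hxW : ∀ x, x ∈ W x := fun x => ((hnb x).1 _ (hWmem x)).2
  have hWopen : ∀ x, IsOpen (W x) := fun x => ((hnb x).1 _ (hWmem x)).1
  choose Cx hCxB hxCx hCxW using fun x : X =>
    hB.exists_subset_of_mem_open (hxW x) (hWopen x)
  have hinj : Function.Injective
      (fun x : X => ((⟨Bx x, hBxB x⟩ : B), (⟨Cx x, hCxB x⟩ : B))) := by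
    intro x y hxy
    by_contra hne
    simp only [Prod.mk.injEq, Subtype.mk.injEq] at hxy
    obtain ⟨hBeq, hCeq⟩ := hxy
    have hyW : y ∈ W x := hCxW x (by rw [hCeq]; exact hxCx y)
    have hWV : W x ⊆ V y := by
      refine (hWB x).trans ?_
      rw [hBeq]
      exact (hBxU y).trans (hUV y)
    exact hVwit y x hne _ (hWmem x) hyW hWV
  by_cases hfin : ℵ₀ ≤ #(↥B)
  · have h1 : #X ≤ #(↥B × ↥B) := Cardinal.mk_le_of_injective hinj
    have h2 : #(↥B × ↥B) = #(↥B) * #(↥B) := by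
      rw [Cardinal.mk_prod]; simp
    rw [h2, Cardinal.mul_eq_self hfin] at h1
    exact h1
  · -- B is finite, hence X is finite
    have hBfin : Finite ↥B := by
      rw [not_le] at hfin
      exact Cardinal.lt_aleph0_iff_finite.mp hfin
    have hXfin : Finite X := Finite.of_injective _ hinj
    -- minimal neighbourhoods
    set m : X → Set X := fun x => ⋂₀ {V : Set X | IsOpen V ∧ x ∈ V} with hm
    have hmopen : ∀ x, IsOpen (m x) := fun x =>
      Set.Finite.isOpen_sInter (Set.toFinite _) (fun t ht => ht.1)
    have hxm : ∀ x, x ∈ m x := fun x => mem_sInter.2 fun V hV => hV.2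
    have hmsub : ∀ x, ∀ V : Set X, IsOpen V → x ∈ V → m x ⊆ V :=
      fun x V hV hxV => sInter_subset_of_mem ⟨hV, hxV⟩
    choose D hDB hxD hDm using fun x : X =>
      hB.exists_subset_of_mem_open (hxm x) (hmopen x)
    have hinj2 : Function.Injective (fun x : X => (⟨D x, hDB x⟩ : B)) := by
      intro x y hxy
      by_contra hne
      simp only [Subtype.mk.injEq] at hxy
      have hymx : y ∈ m x := hDm x (by rw [hxy]; exact hxD y)
      have hxmy : x ∈ m y := hDm y (by rw [← hxy]; exact hxD x)
      have hyVx : y ∈ V x := hmsub x (V x) (hVopen x) (hxV x) hymx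
      obtain ⟨Wy, hWy, hWyV⟩ := (hnb y).2 (V x) (hVopen x) hyVx
      have hWyopen : IsOpen Wy := ((hnb y).1 _ hWy).1
      have hyWy : y ∈ Wy := ((hnb y).1 _ hWy).2
      have hxWy : x ∈ Wy := hmsub y Wy hWyopen hyWy hxmy
      exact hVwit x y (fun h' => hne h'.symm) _ hWy hxWy hWyV
    exact Cardinal.mk_le_of_injective hinj2

lemma weight_le_max : weight X ≤ max (character X) #X := by
  by_cases hfin : Finite X
  · have hbasis : IsTopologicalBasis
        (Set.range (fun x : X => ⋂₀ {V : Set X | IsOpen V ∧ x ∈ V})) := by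
      refine isTopologicalBasis_of_isOpen_of_nhds ?_ ?_
      · rintro _ ⟨x, rfl⟩
        exact Set.Finite.isOpen_sInter (Set.toFinite _) (fun t ht => ht.1)
      · intro a u hau hu
        exact ⟨_, ⟨a, rfl⟩, mem_sInter.2 fun V hV => hV.2,
          sInter_subset_of_mem ⟨hu, hau⟩⟩
    exact (weight_le hbasis).trans (Cardinal.mk_range_le.trans (le_max_right _ _))
  · have hXinf : ℵ₀ ≤ #X := by
      have : Infinite X := not_finite_iff_infinite.mp hfin
      exact Cardinal.infinite_iff.mp this
    choose Bx hBx hcard using fun x : X => exists_nbhdBasis_card x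
    have hbasis : IsTopologicalBasis (⋃ x, Bx x) := by
      refine isTopologicalBasis_of_isOpen_of_nhds ?_ ?_
      · intro u hu
        rw [mem_iUnion] at hu
        obtain ⟨x, hx⟩ := hu
        exact ((hBx x).1 u hx).1
      · intro a u hau hu
        obtain ⟨U, hU, hUu⟩ := (hBx a).2 u hu hau
        exact ⟨U, mem_iUnion.2 ⟨a, hU⟩, ((hBx a).1 U hU).2, hUu⟩
    refine (weight_le hbasis).trans ?_
    calc #(⋃ x, Bx x) ≤ #X * ⨆ x, #(Bx x) := Cardinal.mk_iUnion_le _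
      _ = #X * character X := by
          rw [character]
          congr 1
          exact iSup_congr fun x => (hcard x).symm
      _ ≤ max (max #X (character X)) ℵ₀ := Cardinal.mul_le_max _ _
      _ ≤ max (character X) #X := by
          rw [max_comm #X (character X)]
          exact max_le le_rfl (hXinf.trans (le_max_right _ _))

end Aux

/-- if `X` has an irreducible base then `w(X) = χ(X)·|X|`. -/
theorem statement3 {X : Type u} [TopologicalSpace X] (h : HasIrreducibleBase X) :
    weight X = max (character X) #X := by
  refine le_antisymm weight_le_max (max_le character_le_weight ?_)
  obtain ⟨B, hB, hw⟩ := exists_basis_card (X := X)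
  rw [hw]
  exact card_le_basis h hB
end

section
/- A subspace Y of a topological space X is weakly separated if and only if there exists a neighbourhood assignment f on Y (with values open in X) such that for every open set G ⊆ X, the set D_G^f = {y ∈ Y : y ∈ G ⊆ f(y)} has at most one element. -/
open TopologicalSpace Cardinal Set

universe u

/-- `Y` is weakly separated iff there is a neighbourhood assignment `f`
on `Y` with `|D_G^f| ≤ 1` for every open `G`. -/
theorem statement4 {X : Type u} [TopologicalSpace X] (Y : Set X) :
    WeaklySeparatedSub Y ↔
      ∃ f : X → Set X, IsNbhdAssignment Y f ∧
        ∀ G : Set X, IsOpen G → (Dset Y f G).Subsingleton := by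
  constructor
  · rintro ⟨f, hf, hsep⟩
    refine ⟨f, hf, fun G _ y hy z hz => ?_⟩
    obtain ⟨hyY, hyG, hGfy⟩ := hy
    obtain ⟨hzY, hzG, hGfz⟩ := hz
    by_contra hne
    rcases hsep y hyY z hzY hne with h | h
    · exact h (hGfz hyG)
    · exact h (hGfy hzG)
  · rintro ⟨f, hf, hD⟩
    refine ⟨f, hf, fun y hy z hz hne => ?_⟩
    by_contra h
    push_neg at h
    obtain ⟨hyfz, hzfy⟩ := h
    have hG : IsOpen (f y ∩ f z) := ((hf y hy).1).inter ((hf z hz).1)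
    exact hne (hD _ hG ⟨hy, ⟨(hf y hy).2, hyfz⟩, fun w hw => hw.1⟩
      ⟨hz, ⟨hzfy, (hf z hz).2⟩, fun w hw => hw.2⟩)
end

section
/- If a topological space X has an irreducible base, then there is a neighbourhood assignment f on X such that for every open G ⊆ X, the set D_G^f = {x ∈ X : x ∈ G ⊆ f(x)} is closed and discrete in the subspace G. -/
open TopologicalSpace Cardinal Set

universe u

/-- if `X` has an irreducible base, there is a neighbourhood assignment `f`
such that `D_G^f` is closed and discrete in the subspace `G` for every open `G`. -/
theorem statement5 {X : Type u} [TopologicalSpace X] (h : HasIrreducibleBase X) :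
    ∃ f : X → Set X, (∀ x, IsOpen (f x) ∧ x ∈ f x) ∧
      ∀ G : Set X, IsOpen G →
        (closure (Dset Set.univ f G) ∩ G ⊆ Dset Set.univ f G) ∧
        (∀ x ∈ Dset Set.univ f G,
          ∃ U : Set X, IsOpen U ∧ x ∈ U ∧ U ∩ Dset Set.univ f G ⊆ {x}) := by
  obtain ⟨𝒰, hbase, hnbhd, hirr⟩ := h
  -- For each x, pick an open V ∋ x witnessing the failure of ContainsNbhdBasisAt
  have key : ∀ x : X, ∃ V : Set X, IsOpen V ∧ x ∈ V ∧
      ∀ U, U ∈ (⋃ y ∈ {y : X | y ≠ x}, 𝒰 y) → ¬ (x ∈ U ∧ U ⊆ V) := by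
    intro x
    have := hirr x
    simp only [ContainsNbhdBasisAt, not_forall] at this
    obtain ⟨V, hVo, hxV, hV⟩ := this
    push_neg at hV
    exact ⟨V, hVo, hxV, fun U hU hc => (hV U hU hc.1) hc.2⟩
  choose f hfo hxf hf using key
  refine ⟨f, fun x => ⟨hfo x, hxf x⟩, ?_⟩
  intro G hG
  -- Key claim: for every x ∈ G there is open U ∋ x with U ∩ D_G ⊆ {x}
  have claim : ∀ x ∈ G, ∃ U : Set X, IsOpen U ∧ x ∈ U ∧ U ∩ Dset Set.univ f G ⊆ {x} := by
    intro x hxG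
    obtain ⟨hmem, hbas⟩ := hnbhd x
    obtain ⟨U, hU𝒰, hUG⟩ := hbas G hG hxG
    obtain ⟨hUo, hxU⟩ := hmem U hU𝒰
    refine ⟨U, hUo, hxU, ?_⟩
    rintro y ⟨hyU, -, hyG, hGfy⟩
    by_contra hne
    have hne' : x ≠ y := fun e => hne (by simp [e])
    exact hf y U (by
      simp only [Set.mem_iUnion]
      exact ⟨x, hne', hU𝒰⟩) ⟨hyU, hUG.trans hGfy⟩
  constructor
  · rintro x ⟨hxcl, hxG⟩
    obtain ⟨U, hUo, hxU, hsub⟩ := claim x hxG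
    obtain ⟨y, hyU, hyD⟩ := mem_closure_iff.mp hxcl U hUo hxU
    have : y = x := hsub ⟨hyU, hyD⟩
    rwa [← this]
  · intro x hx
    exact claim x hx.2.1
end

section
/- Let f be a neighbourhood assignment on a topological space X and λ ≤ |X| a regular cardinal. If for every subset N ⊆ X the set D_N^f = {x : x ∈ N ⊆ f(x)} is a union of fewer than λ many pseudo weakly separated subspaces, then nw(X) ≥ |X|. -/
open TopologicalSpace Cardinal Set

universe u

/-- A weakly separated subspace injects into any network. -/
lemma ws_le_network {X : Type u} [TopologicalSpace X] {𝒩 : Set (Set X)}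
    (hN : IsNetwork 𝒩) {W : Set X} (hW : WeaklySeparatedSub W) : #W ≤ #𝒩 := by
  obtain ⟨g, hg, hsep⟩ := hW
  have hx : ∀ w : W, ∃ M : 𝒩, (w : X) ∈ (M : Set X) ∧ (M : Set X) ⊆ g w := by
    intro w
    obtain ⟨ho, hm⟩ := hg w w.2
    obtain ⟨M, hM, hwM, hMs⟩ := hN w (g w) ho hm
    exact ⟨⟨M, hM⟩, hwM, hMs⟩
  choose F hF1 hF2 using hx
  apply Cardinal.mk_le_of_injective (f := F)
  intro a b hab
  by_contra hne
  have hne' : (a : X) ≠ (b : X) := fun hc => hne (Subtype.coe_injective hc)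
  rcases hsep a a.2 b b.2 hne' with h1 | h1
  · apply h1
    apply hF2 b
    have := hF1 a
    rwa [hab] at this
  · apply h1
    apply hF2 a
    have := hF1 b
    rwa [← hab] at this

/-- if each `D_N^f` (all `N ⊆ X`) is a union of fewer than `λ` pseudo
weakly separated subspaces, then `nw(X) ≥ |X|`. -/
theorem statement9 {X : Type u} [TopologicalSpace X] (f : X → Set X)
    (hf : ∀ x, IsOpen (f x) ∧ x ∈ f x) (lam : Cardinal.{u}) (hreg : lam.IsRegular)
    (hle : lam ≤ #X)
    (h : ∀ N : Set X, ∃ S : Set (Set X), #S < lam ∧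
      Dset Set.univ f N = ⋃₀ S ∧ ∀ Z ∈ S, PseudoWeaklySeparated Z) :
    #X ≤ netWeight X := by
  by_contra hcon
  push_neg at hcon
  have hne : {c | ∃ N : Set (Set X), IsNetwork N ∧ c = #N}.Nonempty := by
    refine ⟨_, {S : Set X | ∃ x, S = {x}}, ?_, rfl⟩
    intro x U hU hxU
    exact ⟨{x}, ⟨x, rfl⟩, rfl, by simpa using hxU⟩
  obtain ⟨𝒩, h𝒩, hcard⟩ := csInf_mem hne
  have hν : #𝒩 < #X := hcard ▸ hcon
  set ν := #𝒩 with hνdef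
  choose S hSlt hSeq hSpws using h
  set T : Set (Set X) := ⋃ N ∈ 𝒩, S N with hTdef
  have hcover : ∀ x : X, ∃ Z ∈ T, x ∈ Z := by
    intro x
    obtain ⟨hop, hxf⟩ := hf x
    obtain ⟨N, hNm, hxN, hNs⟩ := h𝒩 x (f x) hop hxf
    have hxD : x ∈ Dset Set.univ f N := ⟨trivial, hxN, hNs⟩
    rw [hSeq N] at hxD
    obtain ⟨Z, hZ, hxZ⟩ := hxD
    exact ⟨Z, Set.mem_biUnion hNm hZ, hxZ⟩
  have hZle : ∀ Z : T, #(Z : Set X) ≤ ν := by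
    rintro ⟨Z, hZ⟩
    simp only [hTdef, Set.mem_iUnion] at hZ
    obtain ⟨N, hNm, hZS⟩ := hZ
    obtain ⟨W, hWZ, hWcard, hWws⟩ := hSpws N Z hZS
    calc #(Z : Set X) = #W := hWcard.symm
    _ ≤ ν := ws_le_network h𝒩 hWws
  have hsU : (Set.univ : Set X) = ⋃₀ T := by
    apply Set.eq_of_subset_of_subset
    · intro x _
      obtain ⟨Z, hZ, hxZ⟩ := hcover x
      exact ⟨Z, hZ, hxZ⟩
    · intro x _; trivial
  have hXle : #X ≤ #T * ν := by
    calc #X = #(Set.univ : Set X) := Cardinal.mk_univ.symm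
    _ = #(⋃₀ T) := by rw [hsU]
    _ ≤ #T * ⨆ Z : T, #(Z : Set X) := Cardinal.mk_sUnion_le T
    _ ≤ #T * ν := by
        apply mul_le_mul' le_rfl
        exact ciSup_le' hZle
  have hTle : #T ≤ ν * ⨆ N : 𝒩, #(S (N : Set X)) := Cardinal.mk_biUnion_le S 𝒩
  rcases lt_or_ge ν lam with hlt | hge
  · -- ν < lam : everything is < lam, contradicting lam ≤ #X
    have hsup : (⨆ N : 𝒩, #(S (N : Set X))) < lam :=
      Cardinal.iSup_lt_of_isRegular hreg hlt (fun N => hSlt N)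
    have hT : #T < lam := hTle.trans_lt (Cardinal.mul_lt_of_lt hreg.aleph0_le hlt hsup)
    have : #X < lam := hXle.trans_lt (Cardinal.mul_lt_of_lt hreg.aleph0_le hT hlt)
    exact absurd hle (not_le.mpr this)
  · -- lam ≤ ν : ν is infinite, so #X ≤ ν < #X
    have hν0 : Cardinal.aleph0 ≤ ν := hreg.aleph0_le.trans hge
    have hsup : (⨆ N : 𝒩, #(S (N : Set X))) ≤ ν :=
      ciSup_le' (fun N => ((hSlt (N : Set X)).le).trans hge)
    have hT : #T ≤ ν := by
      calc #T ≤ ν * ⨆ N : 𝒩, #(S (N : Set X)) := hTle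
      _ ≤ ν * ν := mul_le_mul' le_rfl hsup
      _ = ν := Cardinal.mul_eq_self hν0
    have : #X ≤ ν := by
      calc #X ≤ #T * ν := hXle
      _ ≤ ν * ν := mul_le_mul' hT le_rfl
      _ = ν := Cardinal.mul_eq_self hν0
    exact absurd this (not_le.mpr hν)
end

section
/- Let κ be a cardinal and X a topological space with χ(p, X) < κ for each p ∈ X, where κ is regular. If w(X) ≥ κ, then there is a subspace Y ⊆ X of size κ and a neighbourhood assignment f on Y such that for every open G ⊆ X, the set D_G^f is right-separated (in a well-order of type ≤ κ, each point has a neighbourhood missing all later points of D_G^f). -/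
open TopologicalSpace Cardinal Set

universe u

/-!
Recursively along `κ`, choose points `y α` and open sets `U α ∋ y α` such that no member `B` of a
minimal neighbourhood base of an earlier point `y β` satisfies `y α ∈ B ⊆ U α`. This is possible
because, by regularity, fewer than `κ` bases of size `< κ` contain fewer than `κ` open sets, which
cannot form a base when `w(X) ≥ κ`. Put `f (y α) = U α` and order `D_G^f` by index: a point
`y α ∈ G` has a basic `B` with `y α ∈ B ⊆ G`, and a later point `y β` of `D_G^f` lying in `B`
would give `y β ∈ B ⊆ G ⊆ U β`.
-/

theorem exists_seq_forall_image_Iio {ι α : Type u} [LinearOrder ι] [WellFoundedLT ι]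
    {κ : Cardinal.{u}} (hι : ∀ i : ι, #(Iio i) < κ) (P : Set α → α → Prop)
    (hP : ∀ S : Set α, #S < κ → ∃ a, P S a) :
    ∃ g : ι → α, ∀ i, P (g '' Iio i) (g i) := by
  rcases isEmpty_or_nonempty α with hα | hα
  · have : IsEmpty ι :=
      ⟨fun i => isEmptyElim (hP ∅ (by simpa using zero_le.trans_lt (hι i))).choose⟩
    exact ⟨isEmptyElim, isEmptyElim⟩
  let g : ι → α := WellFoundedLT.fix fun i prior =>
    Classical.epsilon (P (range fun j : Iio i => prior j j.2))
  have hg : ∀ i, g i = Classical.epsilon (P (g '' Iio i)) := fun i => by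
    rw [image_eq_range]
    exact WellFoundedLT.fix_eq _ i
  exact ⟨g, fun i => hg i ▸ Classical.epsilon_spec (hP _ (mk_image_le.trans_lt (hι i)))⟩

section Topology

variable {X : Type u} [TopologicalSpace X]

theorem exists_nbhdBasisAt_mk_eq_charAt (x : X) :
    ∃ B : Set (Set X), NbhdBasisAt B x ∧ #B = charAt x := by
  have hne : {c | ∃ B : Set (Set X), NbhdBasisAt B x ∧ c = #B}.Nonempty :=
    ⟨_, {U | IsOpen U ∧ x ∈ U}, ⟨fun _ hU => hU, fun V hV hxV => ⟨V, ⟨hV, hxV⟩, subset_rfl⟩⟩, rfl⟩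
  obtain ⟨B, hB, h⟩ := csInf_mem hne
  exact ⟨B, hB, h.symm⟩

theorem exists_isOpen_forall_not_subset_of_mk_lt_weight {F : Set (Set X)}
    (hF : ∀ B ∈ F, IsOpen B) (hcard : #F < weight X) :
    ∃ q : X, ∃ V : Set X, IsOpen V ∧ q ∈ V ∧ ∀ B ∈ F, q ∈ B → ¬B ⊆ V := by
  by_contra! h
  have hbasis : IsTopologicalBasis F :=
    isTopologicalBasis_of_isOpen_of_nhds hF fun a u hau hu => h a u hu hau
  exact hcard.not_ge (csInf_le' ⟨F, hbasis, rfl⟩)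

variable {𝓑 : X → Set (Set X)}

theorem exists_isOpen_forall_not_subset_of_isRegular {κ : Cardinal.{u}} (hreg : κ.IsRegular)
    (hw : κ ≤ weight X) (h𝓑 : ∀ x, ∀ B ∈ 𝓑 x, IsOpen B) (hcard : ∀ x, #(𝓑 x) < κ)
    {S : Set X} (hS : #S < κ) :
    ∃ q : X, ∃ V : Set X, IsOpen V ∧ q ∈ V ∧ ∀ x ∈ S, ∀ B ∈ 𝓑 x, q ∈ B → ¬B ⊆ V := by
  have hunion : #(⋃ x ∈ S, 𝓑 x) < κ :=
    (card_biUnion_lt_iff_forall_of_isRegular hreg hS).2 fun x _ => hcard x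
  have hopen : ∀ B ∈ ⋃ x ∈ S, 𝓑 x, IsOpen B := fun B hB => by
    obtain ⟨x, -, hB⟩ := mem_iUnion₂.1 hB
    exact h𝓑 x B hB
  obtain ⟨q, V, hV, hqV, hesc⟩ :=
    exists_isOpen_forall_not_subset_of_mk_lt_weight hopen (hunion.trans_le hw)
  exact ⟨q, V, hV, hqV, fun x hx B hB => hesc B (mem_biUnion hx hB)⟩

variable {ι : Type*} [LinearOrder ι] {y : ι → X} {U : ι → Set X}

def EscapesEarlierBases (𝓑 : X → Set (Set X)) (y : ι → X) (U : ι → Set X) : Prop :=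
  ∀ α β, β < α → ∀ B ∈ 𝓑 (y β), y α ∈ B → ¬B ⊆ U α

theorem EscapesEarlierBases.injective (h𝓑 : ∀ x, NbhdBasisAt (𝓑 x) x)
    (hU : ∀ α, IsOpen (U α) ∧ y α ∈ U α) (hesc : EscapesEarlierBases 𝓑 y U) :
    Function.Injective y := by
  have hne : ∀ {α β}, β < α → y α ≠ y β := fun {α β} hβα heq => by
    obtain ⟨B, hB, hBU⟩ := (h𝓑 (y β)).2 (U α) (hU α).1 (heq ▸ (hU α).2)
    exact hesc α β hβα B hB (heq ▸ ((h𝓑 (y β)).1 B hB).2) hBU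
  intro α β hαβ
  by_contra hαβ'
  rcases lt_or_gt_of_ne hαβ' with h | h
  · exact hne h hαβ.symm
  · exact hne h hαβ

theorem rightSeparated_of_subset_range [WellFoundedLT ι] {S : Set X} (hS : S ⊆ range y)
    (h : ∀ α, y α ∈ S → ∃ V, IsOpen V ∧ y α ∈ V ∧ ∀ β, α < β → y β ∈ S → y β ∉ V) :
    RightSeparated S := by
  choose idx hidx using fun x : S => hS x.2
  have hinj : Function.Injective idx := fun a b hab =>
    Subtype.ext (by rw [← hidx a, ← hidx b, hab])
  refine ⟨fun a b => idx a < idx b, RelEmbedding.isWellOrder ⟨⟨idx, hinj⟩, Iff.rfl⟩, fun x => ?_⟩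
  obtain ⟨V, hV, hxV, hlater⟩ := h (idx x) (by rw [hidx x]; exact x.2)
  exact ⟨V, hV, hidx x ▸ hxV, fun z hlt => hidx z ▸ hlater _ hlt (by rw [hidx z]; exact z.2)⟩

theorem EscapesEarlierBases.rightSeparated_dset [WellFoundedLT ι]
    (h𝓑 : ∀ x, NbhdBasisAt (𝓑 x) x) (hesc : EscapesEarlierBases 𝓑 y U) {f : X → Set X}
    (hf : ∀ α, f (y α) = U α) {G : Set X} (hG : IsOpen G) :
    RightSeparated (Dset (range y) f G) := by
  refine rightSeparated_of_subset_range (fun _ hz => hz.1) fun α ⟨_, hαG, _⟩ => ?_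
  obtain ⟨B, hB, hBG⟩ := (h𝓑 (y α)).2 G hG hαG
  refine ⟨B, ((h𝓑 (y α)).1 B hB).1, ((h𝓑 (y α)).1 B hB).2, fun β hαβ ⟨_, _, hGf⟩ hβB => ?_⟩
  exact hesc β α hαβ B hB hβB (hBG.trans (hf β ▸ hGf))

end Topology

/-- if `χ(p,X) < κ` for all `p` (`κ` regular) and `w(X) ≥ κ`, then there
is a subspace `Y` of size `κ` and a neighbourhood assignment `f` on `Y` such that
`D_G^f` is right-separated for every open `G`. -/
theorem statement10 {X : Type u} [TopologicalSpace X] (κ : Cardinal.{u})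
    (hreg : κ.IsRegular) (hχ : ∀ p : X, charAt p < κ) (hw : κ ≤ weight X) :
    ∃ Y : Set X, #Y = κ ∧ ∃ f : X → Set X, IsNbhdAssignment Y f ∧
      ∀ G : Set X, IsOpen G → RightSeparated (Dset Y f G) := by
  choose 𝓑 h𝓑 hcard𝓑 using exists_nbhdBasisAt_mk_eq_charAt (X := X)
  have h𝓑open : ∀ x, ∀ B ∈ 𝓑 x, IsOpen B := fun x B hB => ((h𝓑 x).1 B hB).1
  obtain ⟨g, hg⟩ := exists_seq_forall_image_Iio (ι := κ.ord.ToType)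
    (fun i => by simpa using mk_Iio_lt i)
    (fun S (p : X × Set X) => IsOpen p.2 ∧ p.1 ∈ p.2 ∧
      ∀ x ∈ Prod.fst '' S, ∀ B ∈ 𝓑 x, p.1 ∈ B → ¬B ⊆ p.2)
    fun S hS => by
      obtain ⟨q, V, hV, hqV, hesc⟩ := exists_isOpen_forall_not_subset_of_isRegular hreg hw
        h𝓑open (fun x => hcard𝓑 x ▸ hχ x) (mk_image_le.trans_lt hS)
      exact ⟨(q, V), hV, hqV, hesc⟩
  set y := fun i => (g i).1
  set U := fun i => (g i).2
  have hU : ∀ i, IsOpen (U i) ∧ y i ∈ U i := fun i => ⟨(hg i).1, (hg i).2.1⟩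
  have hesc : EscapesEarlierBases 𝓑 y U := fun α β hβα =>
    (hg α).2.2 (g β).1 (mem_image_of_mem _ (mem_image_of_mem g hβα))
  have hinj := hesc.injective h𝓑 hU
  set f := Function.extend y U fun _ => univ
  have hf : ∀ i, f (y i) = U i := hinj.extend_apply U _
  refine ⟨range y, by rw [mk_range_eq y hinj, mk_ord_toType], f, ?_,
    fun G hG => hesc.rightSeparated_dset h𝓑 hf hG⟩
  rintro _ ⟨i, rfl⟩
  exact hf i ▸ hU i
end

section
/- Let X be a topological space, κ a cardinal with χ(X) < κ. If there is a subspace Y ⊆ X of size κ, a neighbourhood assignment f on Y, and a regular cardinal λ ≤ κ such that for every open G ⊆ X the set D_G^f is a union of fewer than λ pseudo weakly separated subspaces, then w(X) ≥ κ. -/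
open TopologicalSpace Cardinal Set

universe u

private lemma ws_card_le_base {X : Type u} [TopologicalSpace X] {B : Set (Set X)}
    (hB : IsTopologicalBasis B) {W : Set X} (hW : WeaklySeparatedSub W) : #W ≤ #B := by
  obtain ⟨g, hg, hsep⟩ := hW
  have hch : ∀ y : W, ∃ U : B, (y : X) ∈ (U : Set X) ∧ (U : Set X) ⊆ g y := by
    intro y
    obtain ⟨hopen, hmem⟩ := hg y y.2
    obtain ⟨U, hU, hyU, hUsub⟩ := hB.exists_subset_of_mem_open hmem hopen
    exact ⟨⟨U, hU⟩, hyU, hUsub⟩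
  choose φ hφ1 hφ2 using hch
  have hinj : Function.Injective φ := by
    intro y z hyz
    by_contra hne
    have hyz' : (y : X) ≠ z := fun hc => hne (Subtype.ext hc)
    rcases hsep y y.2 z z.2 hyz' with hc | hc
    · exact hc (hφ2 z (hyz ▸ hφ1 y))
    · exact hc (hφ2 y (hyz.symm ▸ hφ1 z))
  exact Cardinal.mk_le_of_injective hinj


/-- if `χ(X) < κ` and there are `Y ⊆ X` of size `κ`, a neighbourhood
assignment `f` on `Y` and a regular `λ ≤ κ` with every `D_G^f` a union of fewer than
`λ` pseudo weakly separated subspaces, then `w(X) ≥ κ`. -/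
theorem statement11 {X : Type u} [TopologicalSpace X] (κ : Cardinal.{u})
    (hχ : character X < κ) (Y : Set X) (hY : #Y = κ) (f : X → Set X)
    (hf : IsNbhdAssignment Y f) (lam : Cardinal.{u}) (hreg : lam.IsRegular)
    (hlk : lam ≤ κ)
    (h : ∀ G : Set X, IsOpen G → ∃ S : Set (Set X), #S < lam ∧
      Dset Y f G = ⋃₀ S ∧ ∀ Z ∈ S, PseudoWeaklySeparated Z) :
    κ ≤ weight X := by
  have hne : {c | ∃ B : Set (Set X), IsTopologicalBasis B ∧ c = #B}.Nonempty :=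
    ⟨#{U : Set X | IsOpen U}, {U | IsOpen U}, isTopologicalBasis_opens, rfl⟩
  obtain ⟨B, hB, hBw⟩ := csInf_mem hne
  rw [show weight X = #B from hBw]
  by_contra hcon
  push_neg at hcon
  have hκ0 : ℵ₀ ≤ κ := hreg.aleph0_le.trans hlk
  -- choose decompositions
  have hSG : ∀ G : B, ∃ S : Set (Set X), #S < lam ∧
      Dset Y f G = ⋃₀ S ∧ ∀ Z ∈ S, PseudoWeaklySeparated Z :=
    fun G => h G (hB.isOpen G.2)
  choose S hS1 hS2 hS3 using hSG
  -- cover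
  have hcover : Y ⊆ ⋃ G : B, ⋃₀ S G := by
    intro y hy
    obtain ⟨hopen, hmem⟩ := hf y hy
    obtain ⟨U, hU, hyU, hUsub⟩ := hB.exists_subset_of_mem_open hmem hopen
    have : y ∈ Dset Y f U := ⟨hy, hyU, hUsub⟩
    rw [hS2 ⟨U, hU⟩] at this
    exact Set.mem_iUnion.2 ⟨⟨U, hU⟩, this⟩
  -- each Z in each S G has card ≤ #B
  have hZle : ∀ G : B, ∀ Z ∈ S G, #Z ≤ #B := by
    intro G Z hZ
    obtain ⟨W, hWZ, hWcard, hWws⟩ := hS3 G Z hZ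
    exact hWcard ▸ ws_card_le_base hB hWws
  have hterm : ∀ G : B, #(⋃₀ S G : Set X) ≤ #(S G) * #B := by
    intro G
    refine (Cardinal.mk_sUnion_le _).trans (mul_le_mul_right ?_ _)
    exact ciSup_le' fun Z => hZle G Z Z.2
  have hsum : (Cardinal.sum fun G : B => #(⋃₀ S G : Set X)) < κ := by
    rcases lt_or_ge (#B) lam with hBl | hlB
    · refine lt_of_lt_of_le (Cardinal.sum_lt_of_isRegular hreg hBl fun G => ?_) hlk
      exact lt_of_le_of_lt (hterm G) (Cardinal.mul_lt_of_lt hreg.aleph0_le (hS1 G) hBl)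
    · have hBinf : ℵ₀ ≤ #B := hreg.aleph0_le.trans hlB
      have : (Cardinal.sum fun G : B => #(⋃₀ S G : Set X)) ≤ #B * (#B * #B) := by
        refine le_trans (Cardinal.sum_le_sum _ (fun _ => #B * #B) fun G => ?_) ?_
        · exact (hterm G).trans (mul_le_mul_left ((hS1 G).le.trans hlB) _)
        · rw [Cardinal.sum_const']
      refine lt_of_le_of_lt this ?_
      rw [Cardinal.mul_eq_self hBinf, Cardinal.mul_eq_self hBinf]
      exact hcon
  have : κ ≤ Cardinal.sum fun G : B => #(⋃₀ S G : Set X) :=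
    hY ▸ (Cardinal.mk_le_mk_of_subset hcover).trans Cardinal.mk_iUnion_le_sum_mk
  exact absurd (this.trans_lt hsum) (lt_irrefl κ)
end

section
/- For every weakly separated topological space Z, the net weight satisfies nw(Z) ≥ |Z|; consequently R(X) ≤ nw(X) for every topological space X. -/
open TopologicalSpace Cardinal Set

universe u

lemma key_lemma {X : Type u} [TopologicalSpace X] (Y : Set X)
    (hY : WeaklySeparatedSub Y) {N : Set (Set X)} (hN : IsNetwork N) :
    #Y ≤ #N := by
  obtain ⟨f, hf, hsep⟩ := hY
  have hchoice : ∀ y : Y, ∃ M : N, (y : X) ∈ (M : Set X) ∧ (M : Set X) ⊆ f y := by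
    intro y
    obtain ⟨ho, hm⟩ := hf y y.2
    obtain ⟨M, hMN, hyM, hsub⟩ := hN y (f y) ho hm
    exact ⟨⟨M, hMN⟩, hyM, hsub⟩
  choose g hg1 hg2 using hchoice
  have hinj : Function.Injective g := by
    intro y z hgz
    by_contra hne
    have hne' : (y : X) ≠ (z : X) := fun h => hne (Subtype.ext h)
    have hy : (y : X) ∈ f z := hg2 z (hgz ▸ hg1 y)
    have hz : (z : X) ∈ f y := by
      have := hg1 z; rw [← hgz] at this; exact hg2 y this
    rcases hsep y y.2 z z.2 hne' with h | h
    · exact h hy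
    · exact h hz
  exact Cardinal.mk_le_of_injective hinj

lemma netWeight_mem (X : Type u) [TopologicalSpace X] :
    ∃ N : Set (Set X), IsNetwork N ∧ netWeight X = #N := by
  have hne : {c | ∃ N : Set (Set X), IsNetwork N ∧ c = #N}.Nonempty := by
    refine ⟨#(Set.range (fun x : X => ({x} : Set X))), Set.range (fun x => {x}), ?_, rfl⟩
    intro x U _ hxU
    exact ⟨{x}, ⟨x, rfl⟩, rfl, Set.singleton_subset_iff.mpr hxU⟩
  exact csInf_mem hne

theorem statement14 :
    (∀ (Z : Type u) [TopologicalSpace Z],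
      WeaklySeparatedSub (Set.univ : Set Z) → #Z ≤ netWeight Z) ∧
    (∀ (X : Type u) [TopologicalSpace X], Rinv X ≤ netWeight X) := by
  have main : ∀ (X : Type u) [TopologicalSpace X] (Y : Set X),
      WeaklySeparatedSub Y → #Y ≤ netWeight X := by
    intro X _ Y hY
    obtain ⟨N, hN, hEq⟩ := netWeight_mem X
    rw [hEq]
    exact key_lemma Y hY hN
  constructor
  · intro Z _ h
    have := main Z Set.univ h
    rwa [Cardinal.mk_univ] at this
  · intro X _
    apply csSup_le'
    rintro c ⟨Y, hY, rfl⟩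
    exact main X Y hY
end

section
/- In the construction of Theorem 3.1: if u, v ∈ X are distinct, U is a basic τ-neighbourhood of u, V a basic τ-neighbourhood of v, and {u, v} ⊆ U ∩ V, then u, v ∈ Y and U \ V ≠ ∅; i.e., the natural decomposition of the constructed base has property (*). -/
open TopologicalSpace Cardinal Set

universe u

/-- A basic τ-neighbourhood in the construction of Theorem 3.1: points `u ∈ Y` get
`V(u,η) = (Ioo (u-η) (u+η) \ J u) ∩ X`, and points `z n ∈ Z` get
`Ioo (z n - η) (z n + η) ∩ X` for `0 < η < ηz n`. -/
def BasicNbhd (Y : Set ℝ) (z : ℕ → ℝ) (ηz : ℕ → ℝ) (J : ℝ → Set ℝ)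
    (Xset : Set ℝ) (u : ℝ) (U : Set ℝ) : Prop :=
  (u ∈ Y ∧ ∃ η > (0:ℝ), U = (Set.Ioo (u - η) (u + η) \ J u) ∩ Xset) ∨
  (∃ n : ℕ, u = z n ∧ ∃ η : ℝ, 0 < η ∧ η < ηz n ∧
    U = Set.Ioo (u - η) (u + η) ∩ Xset)

/-- in the construction of Theorem 3.1, if `u ≠ v` are points of
`X = Y ∪ Z`, `U`, `V` are basic τ-neighbourhoods of `u`, `v` respectively and
`{u,v} ⊆ U ∩ V`, then `u, v ∈ Y` and `U \ V ≠ ∅`; i.e. the natural decomposition of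
the constructed base has property (*). -/
theorem statement17
    (Y : Set ℝ) (z : ℕ → ℝ) (ηz : ℕ → ℝ) (J : ℝ → Set ℝ)
    (Xset : Set ℝ) (hX : Xset = Y ∪ Set.range z)
    -- `Y` and `Z` consist of irrationals, `Y` is disjoint from `Z`
    (hYirr : ∀ y ∈ Y, Irrational y) (hzirr : ∀ n, Irrational (z n))
    (hYZ : ∀ n, z n ∉ Y)
    -- `Z = {z n}` is a dense set enumerated without repetitions
    (hzinj : Function.Injective z) (hzdense : Dense (Set.range z))
    -- neighbourhoods of `z n` avoid `Y` and earlier points of `Z`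
    (hηz : ∀ n, 0 < ηz n ∧
      Set.Ioo (z n - ηz n) (z n + ηz n) ∩ (Y ∪ {x | ∃ i < n, x = z i}) = ∅)
    -- `J y` is the union of a sequence of disjoint rational intervals converging
    -- to `y`, disjoint from `Y`: it contains intervals arbitrarily close to `y`,
    -- avoids `Y`, and its closure adds only the point `y`
    (hJY : ∀ y ∈ Y, J y ∩ Y = ∅)
    (hJnear : ∀ y ∈ Y, ∀ η > (0:ℝ), ∃ c d : ℝ, c < d ∧
      Set.Ioo c d ⊆ J y ∩ Set.Ioo (y - η) (y + η))
    (hJaway : ∀ y ∈ Y, ∀ x : ℝ, x ≠ y → x ∉ J y →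
      ∃ δ > (0:ℝ), Set.Ioo (x - δ) (x + δ) ∩ J y = ∅)
    (hJy : ∀ y ∈ Y, y ∉ J y) :
    ∀ u v : ℝ, u ≠ v → u ∈ Xset → v ∈ Xset →
      ∀ U V : Set ℝ, BasicNbhd Y z ηz J Xset u U → BasicNbhd Y z ηz J Xset v V →
        u ∈ U ∩ V → v ∈ U ∩ V →
          u ∈ Y ∧ v ∈ Y ∧ (U \ V).Nonempty := by
  intro u v huv hu hv U V hU hV huUV hvUV
  -- First eliminate the case where a basic neighbourhood is of `Z`-form.
  have elim : ∀ (a b : ℝ) (A B : Set ℝ), a ≠ b →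
      BasicNbhd Y z ηz J Xset b B → b ∈ A → a ∈ B →
      (∃ n : ℕ, a = z n ∧ ∃ η : ℝ, 0 < η ∧ η < ηz n ∧
        A = Set.Ioo (a - η) (a + η) ∩ Xset) → False := by
    rintro a b A B hab hB hbA haB ⟨n, rfl, η, hη0, hηlt, rfl⟩
    obtain ⟨hb1, hb2⟩ := hbA
    have hbbig : b ∈ Set.Ioo (z n - ηz n) (z n + ηz n) :=
      ⟨by linarith [hb1.1], by linarith [hb1.2]⟩
    have hbY : b ∉ Y := fun h =>
      Set.eq_empty_iff_forall_notMem.mp (hηz n).2 b ⟨hbbig, Or.inl h⟩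
    have hbZ : ∀ i < n, b ≠ z i := fun i hi h =>
      Set.eq_empty_iff_forall_notMem.mp (hηz n).2 b ⟨hbbig, Or.inr ⟨i, hi, h⟩⟩
    have hbX : b ∈ Xset := hb2
    rw [hX] at hbX
    obtain ⟨m, rfl⟩ : ∃ m, z m = b := by
      rcases hbX with h | h
      · exact absurd h hbY
      · exact h
    have hnm : n < m := by
      rcases lt_trichotomy n m with h | h | h
      · exact h
      · exact absurd (congrArg z h) hab
      · exact absurd rfl (hbZ m h)
    rcases hB with ⟨hY, _⟩ | ⟨m', hm', η', hη'0, hη'lt, hBeq⟩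
    · exact hbY hY
    · have hmm : m' = m := hzinj hm'.symm
      rw [hmm] at hη'lt
      rw [hBeq] at haB
      have : z n ∈ Set.Ioo (z m - ηz m) (z m + ηz m) :=
        ⟨by linarith [haB.1.1], by linarith [haB.1.2]⟩
      exact Set.eq_empty_iff_forall_notMem.mp (hηz m).2 (z n)
        ⟨this, Or.inr ⟨n, hnm, rfl⟩⟩
  rcases hU with ⟨huY, η, hη0, hUeq⟩ | hUz
  · rcases hV with ⟨hvY, η', hη'0, hVeq⟩ | hVz
    · refine ⟨huY, hvY, ?_⟩
      -- v ∈ U : v ∈ Ioo (u-η, u+η), v ∉ J u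
      have hvU := hvUV.1
      rw [hUeq] at hvU
      obtain ⟨⟨hvIoo, hvJu⟩, hvX⟩ := hvU
      obtain ⟨δ, hδ0, hδ⟩ := hJaway u huY v (Ne.symm huv) hvJu
      set δ' := min δ (min (v - (u - η)) (u + η - v)) with hδ'def
      have hδ'0 : 0 < δ' := by
        have h1 : (0:ℝ) < v - (u - η) := by linarith [hvIoo.1]
        have h2 : (0:ℝ) < u + η - v := by linarith [hvIoo.2]
        simp [hδ'def, lt_min_iff, hδ0, h1, h2]
      obtain ⟨c, d, hcd, hsub⟩ := hJnear v hvY δ' hδ'0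
      obtain ⟨x, ⟨k, hk⟩, hxcd⟩ :=
        hzdense.exists_mem_open isOpen_Ioo (Set.nonempty_Ioo.mpr hcd)
      have hxJv : x ∈ J v := (hsub hxcd).1
      have hxnear : x ∈ Set.Ioo (v - δ') (v + δ') := (hsub hxcd).2
      have hδ'δ : δ' ≤ δ := min_le_left _ _
      have hδ'1 : δ' ≤ v - (u - η) := le_trans (min_le_right _ _) (min_le_left _ _)
      have hδ'2 : δ' ≤ u + η - v := le_trans (min_le_right _ _) (min_le_right _ _)
      have hxJu : x ∉ J u := fun h =>
        Set.eq_empty_iff_forall_notMem.mp hδ x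
          ⟨⟨by linarith [hxnear.1], by linarith [hxnear.2]⟩, h⟩
      have hxX : x ∈ Xset := by rw [hX]; exact Or.inr ⟨k, hk⟩
      refine ⟨x, ?_, ?_⟩
      · rw [hUeq]
        exact ⟨⟨⟨by linarith [hxnear.1], by linarith [hxnear.2]⟩, hxJu⟩, hxX⟩
      · rw [hVeq]
        rintro ⟨⟨-, hxJ⟩, -⟩
        exact hxJ hxJv
    · exact (elim v u V U (Ne.symm huv) (Or.inl ⟨huY, η, hη0, hUeq⟩)
        huUV.2 hvUV.1 hVz).elim
  · exact (elim u v U V huv hV hvUV.1 huUV.2 hUz).elim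
end

section
/- Let X be a first countable topological space (χ(p,X) ≤ ω for all p) with w(X) ≥ ω₁. Then there is a transfinite sequence ⟨y_η : η < ω₁⟩ of points of X and open sets f(η) ∋ y_η such that for all ξ < η, no member of a fixed minimal neighbourhood base at y_ξ is contained in f(η) while containing y_η; consequently, for every open G, the set {η : y_η ∈ G ⊆ f(η)} is right-separated in its natural ordering. -/
open TopologicalSpace Cardinal Set

universe u

/-- in a first countable space of weight at least `ω₁` there is a
transfinite sequence `⟨y_η : η < ω₁⟩` with open `f η ∋ y η` such that no member of a
fixed countable neighbourhood base at an earlier `y ξ` is squeezed between `y η` and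
`f η`; consequently for every open `G` the set `{η : y η ∈ G ⊆ f η}` is
right-separated in its natural ordering. -/
theorem statement18 {X : Type} [TopologicalSpace X] [FirstCountableTopology X]
    (hw : Cardinal.aleph 1 ≤ weight X) :
    ∃ B : X → Set (Set X), (∀ p : X, (B p).Countable ∧ NbhdBasisAt (B p) p) ∧
      ∃ (y : Ordinal.{0} → X) (f : Ordinal.{0} → Set X),
        (∀ η < (Cardinal.aleph 1).ord, IsOpen (f η) ∧ y η ∈ f η) ∧
        (∀ ξ η : Ordinal.{0}, ξ < η → η < (Cardinal.aleph 1).ord →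
          ∀ U ∈ B (y ξ), ¬ (y η ∈ U ∧ U ⊆ f η)) ∧
        (∀ G : Set X, IsOpen G →
          ∀ ξ < (Cardinal.aleph 1).ord, y ξ ∈ G → G ⊆ f ξ →
            y ξ ∉ closure {x : X | ∃ η : Ordinal.{0}, ξ < η ∧
              η < (Cardinal.aleph 1).ord ∧ x = y η ∧ y η ∈ G ∧ G ⊆ f η}) := by
  classical
  -- countable open neighbourhood bases
  have hB : ∀ p : X, ∃ B : Set (Set X), B.Countable ∧ NbhdBasisAt B p := by
    intro p
    obtain ⟨b, hb⟩ := (nhds p).exists_antitone_basis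
    have hU : ∀ n : ℕ, ∃ U : Set X, IsOpen U ∧ p ∈ U ∧ U ⊆ b n := by
      intro n
      have hbn : b n ∈ nhds p := hb.mem n
      rcases mem_nhds_iff.mp hbn with ⟨t, hts, hto, hpt⟩
      exact ⟨t, hto, hpt, hts⟩
    choose U hUo hUp hUs using hU
    refine ⟨Set.range U, Set.countable_range U, ?_, ?_⟩
    · rintro _ ⟨n, rfl⟩; exact ⟨hUo n, hUp n⟩
    · intro V hVo hpV
      obtain ⟨n, -, hn⟩ := hb.toHasBasis.mem_iff.mp (hVo.mem_nhds hpV)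
      exact ⟨U n, ⟨n, rfl⟩, (hUs n).trans hn⟩
  choose B hBc hBb using hB
  refine ⟨B, fun p => ⟨hBc p, hBb p⟩, ?_⟩
  -- X is nonempty
  have hne : Nonempty X := by
    by_contra h
    rw [not_nonempty_iff] at h
    have h0 : weight X ≤ 0 := by
      refine csInf_le' ⟨∅, ?_, (Cardinal.mk_emptyCollection _).symm⟩
      exact isTopologicalBasis_of_isOpen_of_nhds (by simp) (fun a => (h.false a).elim)
    exact absurd (hw.trans h0) (not_le.mpr (Cardinal.aleph_pos 1))
  haveI : Nonempty (X × Set X) := ⟨hne.some, ∅⟩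
  -- the key choice lemma
  have pick : ∀ F : Set (Set X), F.Countable → (∀ U ∈ F, IsOpen U) →
      ∃ p : X × Set X, IsOpen p.2 ∧ p.1 ∈ p.2 ∧ ∀ U ∈ F, ¬(p.1 ∈ U ∧ U ⊆ p.2) := by
    intro F hFc hFo
    by_contra h
    push_neg at h
    have hbasis : IsTopologicalBasis F := by
      refine isTopologicalBasis_of_isOpen_of_nhds hFo ?_
      intro a u hau huo
      obtain ⟨U, hUF, hU1, hU2⟩ := h (a, u) huo hau
      exact ⟨U, hUF, hU1, hU2⟩
    have hwle : weight X ≤ #F := csInf_le' ⟨F, hbasis, rfl⟩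
    have hFle : #F ≤ Cardinal.aleph0 := Cardinal.le_aleph0_iff_set_countable.mpr hFc
    exact absurd ((hw.trans hwle).trans hFle) (not_le.mpr Cardinal.aleph0_lt_aleph_one)
  -- the recursive construction
  let Fstep : ∀ η : Ordinal.{0}, (∀ ξ, ξ < η → X × Set X) → X × Set X :=
    fun η ih => Classical.epsilon (fun p : X × Set X => IsOpen p.2 ∧ p.1 ∈ p.2 ∧
      ∀ U ∈ ⋃ ξ : Set.Iio η, B ((ih ξ.1 ξ.2).1), ¬(p.1 ∈ U ∧ U ⊆ p.2))
  let g : Ordinal.{0} → X × Set X := fun η => Ordinal.lt_wf.fix Fstep η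
  have hg : ∀ η : Ordinal.{0}, g η =
      Classical.epsilon (fun p : X × Set X => IsOpen p.2 ∧ p.1 ∈ p.2 ∧
        ∀ U ∈ ⋃ ξ : Set.Iio η, B ((g ξ.1).1), ¬(p.1 ∈ U ∧ U ⊆ p.2)) :=
    fun η => Ordinal.lt_wf.fix_eq Fstep η
  -- the union of earlier bases is countable and consists of open sets
  have hcond : ∀ η : Ordinal.{0}, η < (Cardinal.aleph 1).ord →
      ∃ p : X × Set X, IsOpen p.2 ∧ p.1 ∈ p.2 ∧
        ∀ U ∈ ⋃ ξ : Set.Iio η, B ((g ξ.1).1), ¬(p.1 ∈ U ∧ U ⊆ p.2) := by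
    intro η hη
    apply pick
    · have hc : (Set.Iio η).Countable := by
        rw [Cardinal.countable_iff_lt_aleph_one, Ordinal.mk_Iio_ordinal]
        have h1 : η.card < Cardinal.aleph 1 := Cardinal.lt_ord.mp hη
        have h2 : Cardinal.lift.{1} η.card < Cardinal.lift.{1} (Cardinal.aleph 1) :=
          Cardinal.lift_lt.mpr h1
        simpa using h2
      haveI := hc.to_subtype
      exact Set.countable_iUnion (fun ξ => hBc _)
    · intro U hU
      obtain ⟨ξ, hξ⟩ := Set.mem_iUnion.mp hU
      exact ((hBb _).1 U hξ).1
  have key : ∀ η : Ordinal.{0}, η < (Cardinal.aleph 1).ord →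
      IsOpen (g η).2 ∧ (g η).1 ∈ (g η).2 ∧
        ∀ U ∈ ⋃ ξ : Set.Iio η, B ((g ξ.1).1), ¬((g η).1 ∈ U ∧ U ⊆ (g η).2) := by
    intro η hη
    have hspec := Classical.epsilon_spec (hcond η hη)
    rw [← hg η] at hspec
    exact hspec
  refine ⟨fun η => (g η).1, fun η => (g η).2, ?_, ?_, ?_⟩
  · intro η hη
    exact ⟨(key η hη).1, (key η hη).2.1⟩
  · intro ξ η hξη hη U hU
    exact (key η hη).2.2 U (Set.mem_iUnion.mpr ⟨⟨ξ, hξη⟩, hU⟩)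
  · intro G hG ξ hξ hyG hGf hcl
    obtain ⟨U, hUB, hUG⟩ := (hBb ((g ξ).1)).2 G hG hyG
    have hUo : IsOpen U := ((hBb _).1 U hUB).1
    have hyU : (g ξ).1 ∈ U := ((hBb _).1 U hUB).2
    obtain ⟨x, hxU, hxS⟩ := mem_closure_iff.mp hcl U hUo hyU
    obtain ⟨η, hξη, hη, rfl, hyG', hGf'⟩ := hxS
    exact (key η hη).2.2 U (Set.mem_iUnion.mpr ⟨⟨ξ, hξη⟩, hUB⟩)
      ⟨hxU, hUG.trans hGf'⟩
end

section
/- If X is a topological space with an irreducible base witnessed by a decomposition with property (*), and f is a neighbourhood assignment with f(x) ∈ 𝒰_x for each x, then for every open G and every x ∈ G, x is not an accumulation point of D_G^f; in particular D_G^f has no accumulation points inside G. -/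
open TopologicalSpace Cardinal Set

universe u

/-- given a base decomposition with property (*) and a neighbourhood
assignment `f` with `f x ∈ 𝒰 x`, no point of an open `G` is an accumulation point of
`D_G^f`. -/
theorem statement19 {X : Type u} [TopologicalSpace X] (𝒰 : X → Set (Set X))
    (hbase : TopologicalSpace.IsTopologicalBasis (⋃ x, 𝒰 x))
    (hnb : ∀ x, NbhdBasisAt (𝒰 x) x) (hstar : StarProperty 𝒰)
    (f : X → Set X) (hf : ∀ x, f x ∈ 𝒰 x) :
    ∀ G : Set X, IsOpen G → ∀ x ∈ G,
      ∃ U : Set X, IsOpen U ∧ x ∈ U ∧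
        U ∩ (Dset Set.univ f G \ {x}) = ∅ := by
  intro G hG x hx
  obtain ⟨U, hU𝒰, hUG⟩ := (hnb x).2 G hG hx
  obtain ⟨hUopen, hxU⟩ := (hnb x).1 U hU𝒰
  refine ⟨U, hUopen, hxU, ?_⟩
  ext y
  simp only [Set.mem_inter_iff, Set.mem_diff, Set.mem_singleton_iff,
    Set.mem_empty_iff_false, iff_false, not_and, and_imp]
  rintro hyU ⟨-, hyG, hGf⟩ hyx
  obtain ⟨z, hz1, hz2⟩ := hstar y x hyx (f y) (hf y) U hU𝒰 hyU (hGf hx)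
  exact hz2 (hGf (hUG hz1))
end
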